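/- arXiv:1102.4727 — 3 statements merged into one kernel-verified Lean document; each statement's English description precedes it below -/
import Mathlib

section
/- Every unicyclic graph G has an edge e on its unique cycle C with μ(G − e) = μ(G). -/
/-- A set of vertices is independent if no two of its vertices are adjacent. -/
def SimpleGraph.IsIndepSet' {V : Type*} (G : SimpleGraph V) (s : Set V) : Prop :=
  s.Pairwise (fun a b => ¬ G.Adj a b)

/-- The independence number: the maximum cardinality of an independent set. -/
noncomputable def indepNum {V : Type*} (G : SimpleGraph V) : ℕ :=
  sSup {n | ∃ s : Set V, G.IsIndepSet' s ∧ s.ncard = n}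

/-- The matching number: the maximum cardinality of a matching. -/
noncomputable def matchNum {V : Type*} (G : SimpleGraph V) : ℕ :=
  sSup {n | ∃ M : SimpleGraph.Subgraph G, M.IsMatching ∧ M.edgeSet.ncard = n}

/-- A maximum independent set. -/
def IsMaxIndepSet {V : Type*} (G : SimpleGraph V) (s : Set V) : Prop :=
  G.IsIndepSet' s ∧ s.ncard = indepNum G

/-- The core: intersection of all maximum independent sets. -/
noncomputable def core {V : Type*} (G : SimpleGraph V) : Set V :=
  ⋂₀ {s | IsMaxIndepSet G s}

/-- Open neighborhood of a set. -/
def nbhdSet {V : Type*} (G : SimpleGraph V) (s : Set V) : Set V :=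
  {v | ∃ w ∈ s, G.Adj v w}

/-- Closed neighborhood of a set. -/
def closedNbhdSet {V : Type*} (G : SimpleGraph V) (s : Set V) : Set V :=
  s ∪ nbhdSet G s

/-- The tree component of `G - xy` containing `x`. -/
noncomputable def treeComp {V : Type*} (G : SimpleGraph V) (x y : V) :
    SimpleGraph ((G.deleteEdges {s(x,y)}).connectedComponentMk x).supp :=
  (G.deleteEdges {s(x,y)}).induce ((G.deleteEdges {s(x,y)}).connectedComponentMk x).supp

/-!
A cycle cannot lie inside a matching: its two edges at the base vertex `v` both contain `v`
and are distinct, since they go to the second and the penultimate vertex. So a maximum matching `M`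
of `G` misses some edge `e` of the cycle, `M` is still a matching of `G - e`, and deleting an edge
never increases the matching number.
-/

namespace SimpleGraph

variable {V : Type*} {G G' : SimpleGraph V}

def Subgraph.transfer (M : G.Subgraph) (h : M.spanningCoe ≤ G') : G'.Subgraph where
  verts := M.verts
  Adj := M.Adj
  adj_sub hab := h hab
  edge_vert := M.edge_vert
  symm := M.symm

lemma bddAbove_ncard_edgeSet_isMatching [Finite V] (G : SimpleGraph V) :
    BddAbove {n | ∃ M : G.Subgraph, M.IsMatching ∧ M.edgeSet.ncard = n} := by
  refine ⟨G.edgeSet.ncard, ?_⟩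
  rintro n ⟨M, -, rfl⟩
  exact Set.ncard_le_ncard M.edgeSet_subset (Set.toFinite _)

lemma Subgraph.IsMatching.le_matchNum [Finite V] {M : G.Subgraph} (hM : M.IsMatching)
    (h : M.spanningCoe ≤ G') : M.edgeSet.ncard ≤ matchNum G' :=
  le_csSup (bddAbove_ncard_edgeSet_isMatching G') ⟨M.transfer h, hM, rfl⟩

lemma exists_isMatching_ncard_edgeSet_eq_matchNum [Finite V] (G : SimpleGraph V) :
    ∃ M : G.Subgraph, M.IsMatching ∧ M.edgeSet.ncard = matchNum G := by
  refine Nat.sSup_mem ?_ (bddAbove_ncard_edgeSet_isMatching G)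
  exact ⟨0, ⊥, fun _ hv => hv.elim, by simp⟩

lemma matchNum_mono [Finite V] (h : G ≤ G') : matchNum G ≤ matchNum G' := by
  obtain ⟨M, hM, hcard⟩ := exists_isMatching_ncard_edgeSet_eq_matchNum G
  exact hcard ▸ hM.le_matchNum (M.spanningCoe_le.trans h)

lemma matchNum_deleteEdges_eq_of_disjoint [Finite V] {M : G.Subgraph} (hM : M.IsMatching)
    (hmax : M.edgeSet.ncard = matchNum G) {s : Set (Sym2 V)} (hs : Disjoint M.edgeSet s) :
    matchNum (G.deleteEdges s) = matchNum G := by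
  have hle : M.spanningCoe ≤ G.deleteEdges s := fun a b hab =>
    deleteEdges_adj.2 ⟨M.adj_sub hab, hs.notMem_of_mem_left (M.mem_edgeSet.2 hab)⟩
  exact le_antisymm (matchNum_mono (G.deleteEdges_le s)) (hmax ▸ hM.le_matchNum hle)

lemma Walk.IsCycle.exists_mem_edges_notMem_edgeSet {v : V} {c : G.Walk v v} (hc : c.IsCycle)
    {M : G.Subgraph} (hM : M.IsMatching) : ∃ e ∈ c.edges, e ∉ M.edgeSet := by
  by_contra! hsub
  have hfirst : M.Adj v c.snd := hsub _ (c.mk_start_snd_mem_edges hc.not_nil)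
  have hlast : M.Adj c.penultimate v := hsub _ (c.mk_penultimate_end_mem_edges hc.not_nil)
  exact hc.snd_ne_penultimate (hM.eq_of_adj_left hfirst hlast.symm)

end SimpleGraph

theorem stmt6_general {V : Type*} [Fintype V] (G : SimpleGraph V)
    {v : V} (c : G.Walk v v) (hc : c.IsCycle) :
    ∃ e ∈ c.edges, matchNum (G.deleteEdges {e}) = matchNum G := by
  obtain ⟨M, hM, hmax⟩ := SimpleGraph.exists_isMatching_ncard_edgeSet_eq_matchNum G
  obtain ⟨e, he, heM⟩ := hc.exists_mem_edges_notMem_edgeSet hM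
  exact ⟨e, he, SimpleGraph.matchNum_deleteEdges_eq_of_disjoint hM hmax
    (Set.disjoint_singleton_right.2 heM)⟩

theorem stmt6 {V : Type*} [Fintype V] (G : SimpleGraph V)
    (hconn : G.Connected) (huni : G.edgeSet.ncard = Fintype.card V)
    {v : V} (c : G.Walk v v) (hc : c.IsCycle) :
    ∃ e ∈ c.edges, matchNum (G.deleteEdges {e}) = matchNum G :=
  stmt6_general G c hc
end

section
/- If G is a connected unicyclic graph on n vertices with α(G) + μ(G) = n − 1, then for every edge e of its unique cycle, μ(G − e) = μ(G) and α(G − e) = α(G) + 1. -/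
section

variable {V : Type*} {G H : SimpleGraph V}

lemma bddAbove_indepSet_ncard [Finite V] (G : SimpleGraph V) :
    BddAbove {n | ∃ s : Set V, G.IsIndepSet' s ∧ s.ncard = n} :=
  ⟨Nat.card V, by rintro _ ⟨s, -, rfl⟩; exact Set.ncard_le_card s⟩

lemma SimpleGraph.IsIndepSet'.ncard_le_indepNum [Finite V] {s : Set V} (h : G.IsIndepSet' s) :
    s.ncard ≤ _root_.indepNum G :=
  le_csSup (bddAbove_indepSet_ncard G) ⟨s, h, rfl⟩

lemma exists_isIndepSet'_ncard_eq_indepNum [Finite V] (G : SimpleGraph V) :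
    ∃ s : Set V, G.IsIndepSet' s ∧ s.ncard = indepNum G := by
  have hne : {n | ∃ s : Set V, G.IsIndepSet' s ∧ s.ncard = n}.Nonempty :=
    ⟨0, ∅, Set.pairwise_empty _, Set.ncard_empty V⟩
  exact Nat.sSup_mem hne (bddAbove_indepSet_ncard G)

lemma bddAbove_isMatching_ncard [Finite V] (G : SimpleGraph V) :
    BddAbove {n | ∃ M : G.Subgraph, M.IsMatching ∧ M.edgeSet.ncard = n} :=
  ⟨Nat.card (Sym2 V), by rintro _ ⟨M, -, rfl⟩; exact Set.ncard_le_card _⟩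

lemma SimpleGraph.Subgraph.IsMatching.ncard_le_matchNum [Finite V] {M : G.Subgraph}
    (h : M.IsMatching) : M.edgeSet.ncard ≤ matchNum G :=
  le_csSup (bddAbove_isMatching_ncard G) ⟨M, h, rfl⟩

lemma exists_isMatching_ncard_eq_matchNum [Finite V] (G : SimpleGraph V) :
    ∃ M : G.Subgraph, M.IsMatching ∧ M.edgeSet.ncard = matchNum G := by
  have hne : {n | ∃ M : G.Subgraph, M.IsMatching ∧ M.edgeSet.ncard = n}.Nonempty :=
    ⟨0, ⊥, fun _ hv ↦ hv.elim, by simp⟩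
  exact Nat.sSup_mem hne (bddAbove_isMatching_ncard G)

lemma matchNum_mono [Finite V] (h : H ≤ G) : matchNum H ≤ matchNum G := by
  obtain ⟨M, hM, hcard⟩ := exists_isMatching_ncard_eq_matchNum H
  calc matchNum H = (M.map (SimpleGraph.Hom.ofLE h)).edgeSet.ncard := by simp [hcard]
    _ ≤ matchNum G := (hM.map_ofLE h).ncard_le_matchNum

lemma matchNum_add_one_le_of_adj [Finite V] (h : H ≤ G) {x y : V} (hxy : G.Adj x y)
    (hx : ∀ z, ¬H.Adj x z) (hy : ∀ z, ¬H.Adj y z) : matchNum H + 1 ≤ matchNum G := by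
  obtain ⟨M, hM, hcard⟩ := exists_isMatching_ncard_eq_matchNum H
  set M' := M.map (SimpleGraph.Hom.ofLE h)
  have hverts : ∀ {z}, z ∈ M'.verts → ∃ w, H.Adj z w := by
    intro z hz
    obtain ⟨w, hw, -⟩ := hM (by simpa [M'] using hz)
    exact ⟨w, M.adj_sub hw⟩
  have hdisj : Disjoint M'.support (G.subgraphOfAdj hxy).support := by
    rw [Set.disjoint_right]
    intro z hz hzM
    obtain ⟨w, hw⟩ := hverts (M'.support_subset_verts hzM)
    rcases (G.subgraphOfAdj hxy).support_subset_verts hz with rfl | rfl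
    exacts [hx w hw, hy w hw]
  have hxy_notMem : s(x, y) ∉ M'.edgeSet := fun hmem ↦
    let ⟨w, hw⟩ := hverts (M'.edge_vert hmem)
    hx w hw
  have hmatch := (hM.map_ofLE h).sup (.subgraphOfAdj hxy) hdisj
  have hcard' : (M' ⊔ G.subgraphOfAdj hxy).edgeSet.ncard = matchNum H + 1 := by
    rw [SimpleGraph.Subgraph.edgeSet_sup, SimpleGraph.edgeSet_subgraphOfAdj, Set.union_singleton,
      Set.ncard_insert_of_notMem hxy_notMem]
    simp [M', hcard]
  exact hcard' ▸ hmatch.ncard_le_matchNum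

lemma indepNum_le_indepNum_add_one [Finite V] {y : V}
    (h : ∀ a b, G.Adj a b → a ≠ y → b ≠ y → H.Adj a b) : indepNum H ≤ indepNum G + 1 := by
  obtain ⟨s, hs, hcard⟩ := exists_isIndepSet'_ncard_eq_indepNum H
  have hindep : G.IsIndepSet' (s \ {y}) := fun a ha b hb hab hadj ↦
    hs ha.1 hb.1 hab (h a b hadj ha.2 hb.2)
  calc indepNum H = s.ncard := hcard.symm
    _ ≤ (s \ {y}).ncard + 1 := by simpa using Set.ncard_le_ncard_sdiff_add_ncard s {y}
    _ ≤ indepNum G + 1 := by gcongr; exact hindep.ncard_le_indepNum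

lemma SimpleGraph.IsAcyclic.exists_existsUnique_adj [Finite V] (hG : G.IsAcyclic) {u v : V}
    (huv : G.Adj u v) : ∃ x, ∃! y, G.Adj x y := by
  have : Nonempty V := ⟨u⟩
  obtain ⟨x, _, p, hp, hmax⟩ := SimpleGraph.Walk.exists_isPath_forall_isPath_length_le_length G
  have hnil : ¬p.Nil := fun hnil ↦ by
    simpa [hnil.length_eq_zero] using hmax u v _ (SimpleGraph.Path.singleton huv).isPath
  refine ⟨x, p.snd, p.adj_snd hnil, fun w hxw ↦ hG.eq_snd_of_adj_start hp hxw ?_⟩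
  by_contra hw
  simpa using hmax w _ (p.cons hxw.symm) (hp.cons hw)

lemma card_le_indepNum_add_matchNum_of_isAcyclic [Finite V] (hG : G.IsAcyclic) :
    Nat.card V ≤ indepNum G + matchNum G := by
  induction hn : G.edgeSet.ncard using Nat.strong_induction_on generalizing G with
  | _ n ih =>
  by_cases hbot : G = ⊥
  · subst hbot
    have : (⊥ : SimpleGraph V).IsIndepSet' Set.univ := fun _ _ _ _ _ h ↦ h
    simpa using this.ncard_le_indepNum.trans (Nat.le_add_right _ (matchNum ⊥))
  obtain ⟨u, v, huv⟩ := SimpleGraph.ne_bot_iff_exists_adj.1 hbot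
  obtain ⟨x, y, hxy, hy⟩ := hG.exists_existsUnique_adj huv
  set H := G.deleteIncidenceSet y
  have hle : H ≤ G := G.deleteIncidenceSet_le y
  have hx : ∀ z, ¬H.Adj x z := fun z hz ↦ by
    obtain ⟨hxz, -, hzy⟩ := SimpleGraph.deleteIncidenceSet_adj.1 hz
    exact hzy (hy z hxz)
  have hlt : H.edgeSet.ncard < n := hn ▸ Set.ncard_lt_ncard
    (SimpleGraph.edgeSet_strict_mono (hle.lt_of_ne fun h ↦ hx y (h ▸ hxy)))
  have hα : indepNum H ≤ indepNum G + 1 := indepNum_le_indepNum_add_one fun a b hab ha hb ↦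
    SimpleGraph.deleteIncidenceSet_adj.2 ⟨hab, ha, hb⟩
  have hμ : matchNum H + 1 ≤ matchNum G := matchNum_add_one_le_of_adj hle hxy hx fun z hz ↦
    (SimpleGraph.deleteIncidenceSet_adj.1 hz).2.1 rfl
  have := ih _ hlt (hG.anti hle) rfl
  omega

lemma indepNum_deleteEdges_singleton_le [Finite V] (e : Sym2 V) :
    indepNum (G.deleteEdges {e}) ≤ indepNum G + 1 := by
  induction e with | h x y
  exact indepNum_le_indepNum_add_one (y := y) fun a b hab ha hb ↦
    SimpleGraph.deleteEdges_adj.2 ⟨hab, by simp [ha, hb]⟩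

lemma SimpleGraph.isTree_deleteEdges_of_mem_edges_of_isCycle [Finite V] (hconn : G.Connected)
    (hcard : G.edgeSet.ncard = Nat.card V) {v : V} {c : G.Walk v v} (hc : c.IsCycle)
    {e : Sym2 V} (he : e ∈ c.edges) : (G.deleteEdges {e}).IsTree := by
  induction e with | h x y
  refine isTree_iff_connected_and_card.2
    ⟨hconn.connected_delete_edge_of_not_isBridge fun hb ↦ hb.notMem_edges_of_isCycle hc he, ?_⟩
  have : 0 < Nat.card V := Nat.card_pos_iff.2 ⟨⟨v⟩, inferInstance⟩
  rw [Nat.card_coe_set_eq, edgeSet_deleteEdges,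
    Set.ncard_sdiff_singleton_of_mem (c.edges_subset_edgeSet he), hcard]
  omega

end

theorem stmt8 {V : Type*} [Fintype V] (G : SimpleGraph V)
    (hconn : G.Connected) (huni : G.edgeSet.ncard = Fintype.card V)
    {v : V} (c : G.Walk v v) (hc : c.IsCycle)
    (hsum : indepNum G + matchNum G = Fintype.card V - 1) :
    ∀ e ∈ c.edges, matchNum (G.deleteEdges {e}) = matchNum G ∧
      indepNum (G.deleteEdges {e}) = indepNum G + 1 := by
  intro e he
  have htree := G.isTree_deleteEdges_of_mem_edges_of_isCycle hconn
    (huni.trans Nat.card_eq_fintype_card.symm) hc he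
  have hbound := card_le_indepNum_add_matchNum_of_isAcyclic htree.isAcyclic
  have hμ := matchNum_mono (G.deleteEdges_le {e})
  have hα := indepNum_deleteEdges_singleton_le (G := G) e
  have : 0 < Fintype.card V := Fintype.card_pos_iff.2 ⟨v⟩
  rw [Nat.card_eq_fintype_card] at hbound
  omega
end

section
/- In a bipartite graph G, a vertex v belongs to core(G) (the intersection of all maximum independent sets) if and only if there exists a maximum matching of G that does not saturate v. -/
/-!
For bipartite `G` with bipartition `A ∪ Aᶜ`, the König–Egerváry equality `α(G) + μ(G) = |V|`
holds: for `s ⊆ A` the set `s ∪ (Aᶜ \ N(s))` is independent, so `|s| ≤ |N(s)| + d` with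
`d = α(G) - |Aᶜ|`, and Hall's theorem with `d` dummy vertices matches all but `d` vertices of `A`.

If `M` is a maximum matching missing `v` and `S` is a maximum independent set, every edge of `M`
has an endpoint outside `S`, so `M` covers all `|V| - α(G) = μ(G)` vertices outside `S`; hence
`v ∈ S`. Conversely, if every maximum matching covers `v`, isolating `v` lowers `μ` and therefore
raises `α`, and removing `v` from a maximum independent set of the new graph leaves a maximum
independent set of `G` avoiding `v`.
-/

open Finset

section

variable {V : Type*} [Fintype V] {G : SimpleGraph V}

lemma bddAbove_ncard_isIndepSet (G : SimpleGraph V) :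
    BddAbove {n | ∃ s : Set V, G.IsIndepSet' s ∧ s.ncard = n} :=
  ⟨Nat.card V, by rintro _ ⟨s, -, rfl⟩; exact s.ncard_le_card⟩

lemma bddAbove_ncard_isMatching (G : SimpleGraph V) :
    BddAbove {n | ∃ M : G.Subgraph, M.IsMatching ∧ M.edgeSet.ncard = n} :=
  ⟨Nat.card (Sym2 V), by rintro _ ⟨M, -, rfl⟩; exact M.edgeSet.ncard_le_card⟩

lemma ncard_le_indepNum {s : Set V} (hs : G.IsIndepSet s) : s.ncard ≤ indepNum G :=
  le_csSup (bddAbove_ncard_isIndepSet G) ⟨s, hs, rfl⟩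

lemma ncard_edgeSet_le_matchNum {M : G.Subgraph} (hM : M.IsMatching) :
    M.edgeSet.ncard ≤ matchNum G :=
  le_csSup (bddAbove_ncard_isMatching G) ⟨M, hM, rfl⟩

lemma exists_isIndepSet_ncard_eq_indepNum (G : SimpleGraph V) :
    ∃ s : Set V, G.IsIndepSet s ∧ s.ncard = indepNum G :=
  have hne : {n | ∃ s : Set V, G.IsIndepSet' s ∧ s.ncard = n}.Nonempty :=
    ⟨0, ∅, Set.pairwise_empty _, Set.ncard_empty V⟩
  Nat.sSup_mem hne (bddAbove_ncard_isIndepSet G)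

lemma exists_isMatching_ncard_edgeSet_eq_matchNum (G : SimpleGraph V) :
    ∃ M : G.Subgraph, M.IsMatching ∧ M.edgeSet.ncard = matchNum G :=
  have hne : {n | ∃ M : G.Subgraph, M.IsMatching ∧ M.edgeSet.ncard = n}.Nonempty :=
    ⟨0, ⊥, fun _ hv ↦ hv.elim, by simp⟩
  Nat.sSup_mem hne (bddAbove_ncard_isMatching G)

end

namespace SimpleGraph.Subgraph.IsMatching

variable {V : Type*} {G : SimpleGraph V} {M : G.Subgraph}

theorem ncard_edgeSet_le_ncard_verts_sdiff [Finite V] (hM : M.IsMatching) {S : Set V}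
    (hS : G.IsIndepSet S) : M.edgeSet.ncard ≤ (M.verts \ S).ncard := by
  choose! p hp using fun v (hv : v ∈ M.verts) ↦ (hM hv).exists
  have hmem : ∀ x y, M.Adj x y → x ∉ S → s(x, y) ∈ (fun v ↦ s(v, p v)) '' (M.verts \ S) :=
    fun x y hxy hx ↦ ⟨x, ⟨M.edge_vert hxy, hx⟩, by
      simp only [hM.eq_of_adj_left (hp x (M.edge_vert hxy)) hxy]⟩
  have hsub : M.edgeSet ⊆ (fun v ↦ s(v, p v)) '' (M.verts \ S) := by
    intro e he
    induction e with
    | _ x y =>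
      have hxy : M.Adj x y := he
      by_cases hx : x ∈ S
      · have hy : y ∉ S := fun hy ↦ hS hx hy (M.adj_sub hxy).ne (M.adj_sub hxy)
        exact Sym2.eq_swap ▸ hmem y x hxy.symm hy
      · exact hmem x y hxy hx
  exact (Set.ncard_le_ncard hsub).trans (Set.ncard_image_le (Set.toFinite _))

theorem ncard_le_ncard_edgeSet [Finite V] (hM : M.IsMatching) {s : Set V}
    (hs : G.IsIndepSet s) (hsM : s ⊆ M.verts) : s.ncard ≤ M.edgeSet.ncard := by
  choose! p hp using fun v (hv : v ∈ M.verts) ↦ (hM hv).exists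
  refine Set.ncard_le_ncard_of_injOn (fun v ↦ s(v, p v)) (fun v hv ↦ hp v (hsM hv)) ?_
  intro v hv w hw hvw
  rcases Sym2.eq_iff.mp hvw with ⟨h, -⟩ | ⟨hv_eq, -⟩
  · exact h
  · have hadj := M.adj_sub (hp w (hsM hw))
    rw [← hv_eq] at hadj
    exact (hs hw hv hadj.ne hadj).elim

end SimpleGraph.Subgraph.IsMatching

section

variable {V : Type*} {G : SimpleGraph V}

lemma exists_isMatching_of_injOn {s : Set V} {f : V → V} (hs : G.IsIndepSet s)
    (hf : Set.InjOn f s) (hadj : ∀ v ∈ s, G.Adj v (f v)) :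
    ∃ M : G.Subgraph, M.IsMatching ∧ s ⊆ M.verts := by
  have hdisj : Disjoint s (f '' s) := Set.disjoint_left.mpr fun v hv ⟨w, hw, hwv⟩ ↦
    hs hw hv (hwv ▸ (hadj w hw).ne) (hwv ▸ hadj w hw)
  obtain ⟨M, hMv, hM⟩ := SimpleGraph.Subgraph.IsMatching.exists_of_disjoint_sets_of_equiv hdisj
    (Equiv.Set.imageOfInjOn f s hf) fun v ↦ hadj v v.2
  exact ⟨M, hM, hMv ▸ Set.subset_union_left⟩

end

section

variable {V : Type*} [Fintype V] {G : SimpleGraph V}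

lemma indepNum_add_matchNum_le_card (G : SimpleGraph V) :
    indepNum G + matchNum G ≤ Fintype.card V := by
  obtain ⟨S, hS, hSα⟩ := exists_isIndepSet_ncard_eq_indepNum G
  obtain ⟨M, hM, hMμ⟩ := exists_isMatching_ncard_edgeSet_eq_matchNum G
  calc indepNum G + matchNum G = S.ncard + M.edgeSet.ncard := by rw [hSα, hMμ]
    _ ≤ S.ncard + Sᶜ.ncard := Nat.add_le_add_left
      ((hM.ncard_edgeSet_le_ncard_verts_sdiff hS).trans (Set.ncard_le_ncard fun _ h ↦ h.2)) _
    _ = Fintype.card V := by rw [Set.ncard_add_ncard_compl, Nat.card_eq_fintype_card]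

lemma exists_injective_sum_fin_of_forall_ncard_le_add {A : Set V} (d : ℕ)
    (h : ∀ s ⊆ A, s.ncard ≤ (nbhdSet G s).ncard + d) :
    ∃ F : V → V ⊕ Fin d, F.Injective ∧ ∀ v ∈ A, ∀ w, F v = .inl w → G.Adj v w := by
  classical
  -- Each vertex of `A` is related to its neighbours and to all `d` dummy vertices; vertices
  -- outside `A` are related to everything, so they never violate Hall's condition.
  let r : V → V ⊕ Fin d → Prop := fun v b ↦ v ∈ A → Sum.elim (G.Adj v) (fun _ ↦ True) b
  suffices hall : ∀ S : Finset V, #S ≤ #{b | ∃ a ∈ S, r a b} by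
    obtain ⟨F, hFinj, hF⟩ := (Fintype.all_card_le_filter_rel_iff_exists_injective r).mp hall
    exact ⟨F, hFinj, fun v hv w hw ↦ by simpa [r, hw, hv] using hF v⟩
  intro S
  by_cases hSA : ↑S ⊆ A
  · rcases S.eq_empty_or_nonempty with rfl | ⟨a, ha⟩
    · simp
    have hsub : (nbhdSet G S).toFinset.disjSum univ ⊆ ({b | ∃ a ∈ S, r a b} : Finset _) := by
      rintro (w | i) hw
      · obtain ⟨a, ha, hwa⟩ : w ∈ nbhdSet G S := by simpa using hw
        simpa using ⟨a, ha, fun _ ↦ hwa.symm⟩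
      · simpa using ⟨a, ha, fun _ ↦ trivial⟩
    calc #S = (S : Set V).ncard := (Set.ncard_coe_finset S).symm
      _ ≤ (nbhdSet G S).ncard + d := h _ hSA
      _ = #((nbhdSet G S).toFinset.disjSum univ) := by
        rw [card_disjSum, Set.ncard_eq_toFinset_card', card_univ, Fintype.card_fin]
      _ ≤ _ := card_le_card hsub
  · obtain ⟨a, ha, haA⟩ := Set.not_subset.mp hSA
    have huniv : ({b | ∃ a ∈ S, r a b} : Finset (V ⊕ Fin d)) = univ :=
      eq_univ_of_forall fun b ↦ by simpa using ⟨a, ha, fun h ↦ (haA h).elim⟩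
    rw [huniv, card_univ, Fintype.card_sum]
    exact (card_le_univ S).trans (Nat.le_add_right _ _)

lemma exists_isMatching_ncard_le_add {A : Set V} (hA : G.IsIndepSet A) (d : ℕ)
    (h : ∀ s ⊆ A, s.ncard ≤ (nbhdSet G s).ncard + d) :
    ∃ M : G.Subgraph, M.IsMatching ∧ A.ncard ≤ M.edgeSet.ncard + d := by
  obtain ⟨F, hFinj, hFadj⟩ := exists_injective_sum_fin_of_forall_ncard_le_add d h
  let s : Set V := {v ∈ A | (F v).isLeft}
  let f : V → V := fun v ↦ Sum.elim id (fun _ ↦ v) (F v)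
  have hFs : ∀ v ∈ s, F v = .inl (f v) := by
    rintro v ⟨-, hv⟩
    obtain ⟨w, hw⟩ := Sum.isLeft_iff.mp hv
    simp [f, hw]
  have hs : G.IsIndepSet s := hA.mono (Set.sep_subset _ _)
  obtain ⟨M, hM, hsM⟩ := exists_isMatching_of_injOn hs
    (fun v hv w hw hvw ↦ hFinj (by rw [hFs v hv, hFs w hw, hvw]))
    (fun v hv ↦ hFadj v hv.1 _ (hFs v hv))
  have hrest : (A \ s).ncard ≤ d := by
    calc (A \ s).ncard ≤ (Set.range (Sum.inr : Fin d → V ⊕ Fin d)).ncard := by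
          refine Set.ncard_le_ncard_of_injOn F (fun v hv ↦ ?_) hFinj.injOn
          obtain ⟨i, hi⟩ := Sum.isRight_iff.mp (Sum.not_isLeft.mp fun h ↦ hv.2 ⟨hv.1, h⟩)
          exact ⟨i, hi.symm⟩
      _ = d := by rw [Set.ncard_range_of_injective Sum.inr_injective, Nat.card_eq_fintype_card,
          Fintype.card_fin]
  have hsA : (A \ s).ncard + s.ncard = A.ncard :=
    Set.ncard_sdiff_add_ncard_of_subset (Set.sep_subset _ _)
  have := hM.ncard_le_ncard_edgeSet hs hsM
  exact ⟨M, hM, by omega⟩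

end

section

variable {V : Type*} {G : SimpleGraph V}

lemma isIndepSet_union_sdiff_nbhdSet {s t : Set V} (hs : G.IsIndepSet s) (ht : G.IsIndepSet t) :
    G.IsIndepSet (s ∪ (t \ nbhdSet G s)) := by
  rintro x (hx | hx) y (hy | hy) hne hxy
  · exact hs hx hy hne hxy
  · exact hy.2 ⟨x, hx, hxy.symm⟩
  · exact hx.2 ⟨y, hy, hxy⟩
  · exact ht hx.1 hy.1 hne hxy

lemma SimpleGraph.IsBipartiteWith.isIndepSet_left {s t : Set V} (h : G.IsBipartiteWith s t) :
    G.IsIndepSet s := by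
  intro x hx y hy _ hxy
  rcases h.mem_of_adj hxy with ⟨-, hyt⟩ | ⟨hxt, -⟩
  · exact h.disjoint.notMem_of_mem_left hy hyt
  · exact h.disjoint.notMem_of_mem_left hx hxt

lemma SimpleGraph.IsBipartiteWith.isIndepSet_compl_left {s t : Set V}
    (h : G.IsBipartiteWith s t) : G.IsIndepSet sᶜ :=
  SimpleGraph.isIndepSet_compl_iff_isVertexCover.mpr fun _ _ hxy ↦
    (h.mem_of_adj hxy).imp (·.1) (·.2)

variable [Fintype V]

lemma card_le_indepNum_add_matchNum {A : Set V} (hA : G.IsIndepSet A) (hAc : G.IsIndepSet Aᶜ) :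
    Fintype.card V ≤ indepNum G + matchNum G := by
  have hAcα := ncard_le_indepNum hAc
  have hdef : ∀ s ⊆ A, s.ncard ≤ (nbhdSet G s).ncard + (indepNum G - Aᶜ.ncard) := by
    intro s hsA
    have hN : nbhdSet G s ⊆ Aᶜ := fun v ⟨w, hw, hvw⟩ hvA ↦ hA hvA (hsA hw) hvw.ne hvw
    have hdisj : Disjoint s (Aᶜ \ nbhdSet G s) :=
      Set.disjoint_left.mpr fun v hv hv' ↦ hv'.1 (hsA hv)
    have hI := ncard_le_indepNum (isIndepSet_union_sdiff_nbhdSet (hA.mono hsA) hAc)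
    rw [Set.ncard_union_eq hdisj, Set.ncard_sdiff hN] at hI
    have := Set.ncard_le_ncard hN
    omega
  obtain ⟨M, hM, hAM⟩ := exists_isMatching_ncard_le_add hA _ hdef
  have hMμ := ncard_edgeSet_le_matchNum hM
  have hAAc : A.ncard + Aᶜ.ncard = Fintype.card V := by
    rw [Set.ncard_add_ncard_compl, Nat.card_eq_fintype_card]
  omega

theorem indepNum_add_matchNum_eq_card (hbip : G.Colorable 2) :
    indepNum G + matchNum G = Fintype.card V := by
  obtain ⟨A, B, hAB⟩ := SimpleGraph.IsBipartite.exists_isBipartiteWith hbip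
  exact (indepNum_add_matchNum_le_card G).antisymm
    (card_le_indepNum_add_matchNum hAB.isIndepSet_left hAB.isIndepSet_compl_left)

end

section

variable {V : Type*} [Fintype V] {G : SimpleGraph V} {v : V}

lemma mem_core_of_isMatching_of_notMem_support (hbip : G.Colorable 2) {M : G.Subgraph}
    (hM : M.IsMatching) (hMμ : M.edgeSet.ncard = matchNum G) (hv : v ∉ M.support) :
    v ∈ core G := by
  rintro S ⟨hS, hSα⟩
  by_contra hvS
  have hsub : M.verts \ S ⊂ Sᶜ := (Set.ssubset_iff_of_subset fun _ h ↦ h.2).mpr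
    ⟨v, hvS, fun h ↦ hv (hM.support_eq_verts ▸ h.1)⟩
  have hlt := (hM.ncard_edgeSet_le_ncard_verts_sdiff hS).trans_lt (Set.ncard_lt_ncard hsub)
  have hSSc : S.ncard + Sᶜ.ncard = Fintype.card V := by
    rw [Set.ncard_add_ncard_compl, Nat.card_eq_fintype_card]
  have := indepNum_add_matchNum_eq_card hbip
  omega

lemma matchNum_deleteIncidenceSet_lt
    (hsat : ∀ M : G.Subgraph, M.IsMatching → M.edgeSet.ncard = matchNum G → v ∈ M.support) :
    matchNum (G.deleteIncidenceSet v) < matchNum G := by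
  obtain ⟨M, hM, hMμ⟩ := exists_isMatching_ncard_edgeSet_eq_matchNum (G.deleteIncidenceSet v)
  let M' := M.map (SimpleGraph.Hom.ofLE (G.deleteIncidenceSet_le v))
  have hM' : M'.IsMatching := hM.map_ofLE _
  have hE : M'.edgeSet = M.edgeSet := by simp [M']
  have hle := ncard_edgeSet_le_matchNum hM'
  rw [hE, hMμ] at hle
  refine hle.lt_of_ne fun heq ↦ ?_
  have hvM' := hsat M' hM' (by rw [hE, hMμ, heq])
  obtain ⟨w, hvw⟩ : v ∈ M.support := by
    simpa [M', hM.support_eq_verts, hM'.support_eq_verts] using hvM'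
  exact (SimpleGraph.deleteIncidenceSet_adj.mp (M.adj_sub hvw)).2.1 rfl

lemma exists_isMaxIndepSet_notMem_of_indepNum_lt
    (h : indepNum G < indepNum (G.deleteIncidenceSet v)) : ∃ S, IsMaxIndepSet G S ∧ v ∉ S := by
  obtain ⟨S, hS, hSα⟩ := exists_isIndepSet_ncard_eq_indepNum (G.deleteIncidenceSet v)
  have hS' : G.IsIndepSet (S \ {v}) := fun x hx y hy hne hxy ↦
    hS hx.1 hy.1 hne (SimpleGraph.deleteIncidenceSet_adj.mpr ⟨hxy, hx.2, hy.2⟩)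
  have hcard := Set.pred_ncard_le_ncard_sdiff_singleton S v
  exact ⟨S \ {v}, ⟨hS', (ncard_le_indepNum hS').antisymm (by omega)⟩, fun hv ↦ hv.2 rfl⟩

lemma exists_isMatching_notMem_support_of_mem_core (hbip : G.Colorable 2) (hv : v ∈ core G) :
    ∃ M : G.Subgraph, M.IsMatching ∧ M.edgeSet.ncard = matchNum G ∧ v ∉ M.support := by
  by_contra! hsat
  have hμ := matchNum_deleteIncidenceSet_lt hsat
  have h' := indepNum_add_matchNum_eq_card (hbip.mono_left (G.deleteIncidenceSet_le v))
  have h := indepNum_add_matchNum_le_card G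
  obtain ⟨S, hS, hvS⟩ := exists_isMaxIndepSet_notMem_of_indepNum_lt (G := G) (v := v) (by omega)
  exact hvS (Set.mem_sInter.mp hv S hS)

end

theorem stmt9 {V : Type*} [Fintype V] (G : SimpleGraph V)
    (hbip : G.Colorable 2) (v : V) :
    v ∈ core G ↔
      ∃ M : SimpleGraph.Subgraph G, M.IsMatching ∧ M.edgeSet.ncard = matchNum G ∧
        v ∉ M.support :=
  ⟨exists_isMatching_notMem_support_of_mem_core hbip,
    fun ⟨_, hM, hMμ, hv⟩ ↦ mem_core_of_isMatching_of_notMem_support hbip hM hMμ hv⟩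
end
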